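/- arXiv:2503.20437 — 5 statements merged into one kernel-verified Lean document; each statement's English description precedes it below -/
import Mathlib

section
/- For every x ∈ X there exists a unique y ∈ Y such that y ∈ Kᗮ and there exists z ∈ Z with Jx x + Jy y + Jz z = 0. (This is the linear system (1.6) of Theorem 2.4 defining the differential DH of the canonical solution map of a constant-rank elimination problem: it has exactly one solution y for each input direction x.) -/
/-!
A solution `(y₀, z₀)` exists because `Jx x ∈ range Jy ⊔ range Jz`. The set of all `y` admitting
some `z` is then the coset `y₀ + K`, since `K = Jy⁻¹(range Jz)`, and a coset of `K` meets the
complement `Kᗮ` in exactly one point.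
-/

namespace Submodule

variable {R M : Type*} [Ring R] [AddCommGroup M] [Module R M]

theorem existsUnique_mem_sub_mem_of_isCompl {p q : Submodule R M} (hpq : IsCompl p q) (x : M) :
    ∃! y : M, y ∈ q ∧ y - x ∈ p := by
  obtain ⟨u, hu, v, hv, rfl⟩ := mem_sup.mp (hpq.sup_eq_top ▸ mem_top : x ∈ p ⊔ q)
  refine ⟨v, ⟨hv, by rwa [sub_add_cancel_right, neg_mem_iff]⟩, ?_⟩
  rintro y ⟨hyq, hyp⟩
  have hdiff : y - v ∈ p ⊓ q := by
    refine ⟨?_, q.sub_mem hyq hv⟩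
    have := p.add_mem hyp hu
    rwa [sub_add_eq_sub_sub, sub_right_comm, sub_add_cancel] at this
  rw [hpq.inf_eq_bot, mem_bot, sub_eq_zero] at hdiff
  exact hdiff

end Submodule

namespace LinearMap

variable {R Y Z W : Type*} [Ring R] [AddCommGroup Y] [Module R Y] [AddCommGroup Z] [Module R Z]
  [AddCommGroup W] [Module R W]

theorem map_fst_ker_coprod (f : Y →ₗ[R] W) (g : Z →ₗ[R] W) :
    (ker (f.coprod g)).map (fst R Y Z) = (range g).comap f := by
  ext y
  constructor
  · rintro ⟨⟨y, z⟩, hyz, rfl⟩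
    exact ⟨-z, by rwa [map_neg, neg_eq_iff_add_eq_zero, add_comm]⟩
  · rintro ⟨z, hz⟩
    exact ⟨(y, -z), by simp [hz], rfl⟩

theorem existsUnique_mem_of_isCompl_comap_range (f : Y →ₗ[R] W) (g : Z →ₗ[R] W)
    {L : Submodule R Y} (hL : IsCompl ((range g).comap f) L) {w : W}
    (hw : w ∈ range f ⊔ range g) :
    ∃! y : Y, y ∈ L ∧ ∃ z : Z, w + f y + g z = 0 := by
  obtain ⟨_, ⟨y₀, rfl⟩, _, ⟨z₀, rfl⟩, rfl⟩ := Submodule.mem_sup.mp hw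
  have hsolution (y : Y) : (∃ z, f y₀ + g z₀ + f y + g z = 0) ↔ y - -y₀ ∈ (range g).comap f := by
    simp only [sub_neg_eq_add, Submodule.mem_comap, mem_range, map_add]
    refine ⟨fun ⟨z, hz⟩ ↦ ⟨-(z₀ + z), ?_⟩, fun ⟨z, hz⟩ ↦ ⟨-(z₀ + z), ?_⟩⟩
    · rw [map_neg, map_add]
      linear_combination (norm := module) -hz
    · rw [map_neg, map_add]
      linear_combination (norm := module) -hz
  simpa only [hsolution] using Submodule.existsUnique_mem_sub_mem_of_isCompl hL (-y₀)

end LinearMap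

theorem stmt3_general {X Y Z W : Type*}
    [NormedAddCommGroup X] [InnerProductSpace ℝ X]
    [NormedAddCommGroup Y] [InnerProductSpace ℝ Y] [FiniteDimensional ℝ Y]
    [NormedAddCommGroup Z] [InnerProductSpace ℝ Z]
    [NormedAddCommGroup W] [InnerProductSpace ℝ W]
    (Jx : X →ₗ[ℝ] W) (Jy : Y →ₗ[ℝ] W) (Jz : Z →ₗ[ℝ] W)
    (hfeas : LinearMap.range Jx ≤ LinearMap.range Jy ⊔ LinearMap.range Jz)
    (K : Submodule ℝ Y)
    (hK : K = (LinearMap.ker (Jy.coprod Jz)).map (LinearMap.fst ℝ Y Z)) :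
    ∀ x : X, ∃! y : Y, y ∈ Kᗮ ∧ ∃ z : Z, Jx x + Jy y + Jz z = 0 := by
  intro x
  rw [LinearMap.map_fst_ker_coprod] at hK
  exact Jy.existsUnique_mem_of_isCompl_comap_range Jz (hK ▸ K.isCompl_orthogonal)
    (hfeas (LinearMap.mem_range_self Jx x))

/-- The linear system (1.6) of Theorem 2.4: for every input direction `x`
there is exactly one `y ∈ Kᗮ` such that `Jx x + Jy y + Jz z = 0` for some `z`,
where `K = {y | ∃ z, Jy y + Jz z = 0}`. -/
theorem stmt3 {X Y Z W : Type*}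
    [NormedAddCommGroup X] [InnerProductSpace ℝ X] [FiniteDimensional ℝ X]
    [NormedAddCommGroup Y] [InnerProductSpace ℝ Y] [FiniteDimensional ℝ Y]
    [NormedAddCommGroup Z] [InnerProductSpace ℝ Z] [FiniteDimensional ℝ Z]
    [NormedAddCommGroup W] [InnerProductSpace ℝ W] [FiniteDimensional ℝ W]
    (Jx : X →ₗ[ℝ] W) (Jy : Y →ₗ[ℝ] W) (Jz : Z →ₗ[ℝ] W)
    (hfeas : LinearMap.range Jx ≤ LinearMap.range Jy ⊔ LinearMap.range Jz)
    (K : Submodule ℝ Y)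
    (hK : K = (LinearMap.ker (Jy.coprod Jz)).map (LinearMap.fst ℝ Y Z)) :
    ∀ x : X, ∃! y : Y, y ∈ Kᗮ ∧ ∃ z : Z, Jx x + Jy y + Jz z = 0 :=
  stmt3_general Jx Jy Jz hfeas K hK
end

section
/- There exists a linear map H : X → Y such that for every x ∈ X, H x ∈ Kᗮ and there exists z ∈ Z with Jx x + Jy (H x) + Jz z = 0; moreover H is the unique linear map with these two properties. (This is the linear map DH(x₀) of Theorem 2.4: the differential of the canonical solution map of a constant-rank elimination problem is the unique linear solution of the system (1.6).) -/
/-!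
For each `x`, the `y` that solve `Jx x + Jy y + Jz z = 0` for some `z` form a coset of `K`,
nonempty by the feasibility hypothesis. A coset of `K` meets `Kᗮ` in exactly one point, the
orthogonal projection onto `Kᗮ` of any of its elements. Choosing the particular solution through a
linear lift of `-Jx` along `(y, z) ↦ Jy y + Jz z` makes this point depend linearly on `x`.
-/

namespace LinearMap

theorem exists_comp_eq_of_range_le {𝕜 V V' W : Type*} [DivisionRing 𝕜]
    [AddCommGroup V] [Module 𝕜 V] [AddCommGroup V'] [Module 𝕜 V'] [AddCommGroup W] [Module 𝕜 W]
    {f : V →ₗ[𝕜] W} {g : V' →ₗ[𝕜] W} (h : range f ≤ range g) :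
    ∃ G : V →ₗ[𝕜] V', g ∘ₗ G = f := by
  obtain ⟨G, hG⟩ := Module.projective_lifting_property g.rangeRestrict
    (f.codRestrict _ fun x ↦ h ⟨x, rfl⟩) g.surjective_rangeRestrict
  exact ⟨G, ext fun x ↦ congr_arg Subtype.val (LinearMap.congr_fun hG x)⟩

section Coprod

variable {R X Y Z W : Type*} [Ring R] [AddCommGroup X] [Module R X] [AddCommGroup Y] [Module R Y]
  [AddCommGroup Z] [Module R Z] [AddCommGroup W] [Module R W]
  {Jx : X →ₗ[R] W} {Jy : Y →ₗ[R] W} {Jz : Z →ₗ[R] W}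

theorem mem_map_fst_ker_coprod {y : Y} :
    y ∈ (ker (Jy.coprod Jz)).map (fst R Y Z) ↔ ∃ z, Jy y + Jz z = 0 := by
  constructor
  · rintro ⟨⟨y, z⟩, hyz, rfl⟩
    exact ⟨z, hyz⟩
  · rintro ⟨z, hz⟩
    exact ⟨(y, z), hz, rfl⟩

theorem sub_mem_map_fst_ker_coprod {x : X} {y y' : Y} {z z' : Z}
    (h : Jx x + Jy y + Jz z = 0) (h' : Jx x + Jy y' + Jz z' = 0) :
    y - y' ∈ (ker (Jy.coprod Jz)).map (fst R Y Z) :=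
  mem_map_fst_ker_coprod.2 ⟨z - z', by
    rw [map_sub, map_sub]
    linear_combination (norm := abel_nf) h - h'⟩

theorem exists_solution_of_sub_mem_map_fst_ker_coprod {x : X} {y y' : Y} {z : Z}
    (h : Jx x + Jy y + Jz z = 0) (hy : y - y' ∈ (ker (Jy.coprod Jz)).map (fst R Y Z)) :
    ∃ z', Jx x + Jy y' + Jz z' = 0 := by
  obtain ⟨w, hw⟩ := mem_map_fst_ker_coprod.1 hy
  refine ⟨z - w, ?_⟩
  rw [map_sub] at hw ⊢
  linear_combination (norm := abel_nf) h - hw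

end Coprod

end LinearMap

theorem Submodule.eq_of_mem_orthogonal_of_sub_mem {𝕜 E : Type*} [RCLike 𝕜]
    [NormedAddCommGroup E] [InnerProductSpace 𝕜 E] {K : Submodule 𝕜 E} {a b : E}
    (ha : a ∈ Kᗮ) (hb : b ∈ Kᗮ) (hab : a - b ∈ K) : a = b :=
  sub_eq_zero.1 <| Submodule.disjoint_def.1 K.orthogonal_disjoint _ hab (sub_mem ha hb)

open LinearMap in
theorem stmt5_general {X Y Z W : Type*}
    [NormedAddCommGroup X] [InnerProductSpace ℝ X]
    [NormedAddCommGroup Y] [InnerProductSpace ℝ Y] [FiniteDimensional ℝ Y]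
    [NormedAddCommGroup Z] [InnerProductSpace ℝ Z]
    [NormedAddCommGroup W] [InnerProductSpace ℝ W]
    (Jx : X →ₗ[ℝ] W) (Jy : Y →ₗ[ℝ] W) (Jz : Z →ₗ[ℝ] W)
    (hfeas : LinearMap.range Jx ≤ LinearMap.range Jy ⊔ LinearMap.range Jz)
    (K : Submodule ℝ Y)
    (hK : K = (LinearMap.ker (Jy.coprod Jz)).map (LinearMap.fst ℝ Y Z)) :
    ∃! H : X →ₗ[ℝ] Y, ∀ x : X,
      H x ∈ Kᗮ ∧ ∃ z : Z, Jx x + Jy (H x) + Jz z = 0 := by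
  obtain ⟨G, hG⟩ : ∃ G : X →ₗ[ℝ] Y × Z, Jy.coprod Jz ∘ₗ G = -Jx :=
    exists_comp_eq_of_range_le (by rwa [range_neg, range_coprod])
  have hG_sol (x : X) : Jx x + Jy (G x).1 + Jz (G x).2 = 0 := by
    rw [add_assoc, ← coprod_apply, ← comp_apply, hG, LinearMap.neg_apply, add_neg_cancel]
  refine existsUnique_of_exists_of_unique
    ⟨Kᗮ.starProjection.toLinearMap ∘ₗ fst ℝ Y Z ∘ₗ G, fun x ↦ ⟨?_, ?_⟩⟩
    fun H H' hH hH' ↦ ext fun x ↦ ?_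
  · exact Kᗮ.starProjection_apply_mem _
  · refine exists_solution_of_sub_mem_map_fst_ker_coprod (hG_sol x) (hK ▸ ?_)
    simp only [coe_comp, Function.comp_apply, fst_apply, ContinuousLinearMap.coe_coe,
      Submodule.starProjection_orthogonal_val, sub_sub_cancel]
    exact K.starProjection_apply_mem _
  · obtain ⟨hHx, z, hz⟩ := hH x
    obtain ⟨hH'x, z', hz'⟩ := hH' x
    exact Submodule.eq_of_mem_orthogonal_of_sub_mem hHx hH'x
      (hK ▸ sub_mem_map_fst_ker_coprod hz hz')

/-- Theorem 2.4: there is a unique linear map `H : X → Y` (the differential of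
the canonical solution map) with `H x ∈ Kᗮ` and
`Jx x + Jy (H x) + Jz z = 0` for some `z`, for every `x`. -/
theorem stmt5 {X Y Z W : Type*}
    [NormedAddCommGroup X] [InnerProductSpace ℝ X] [FiniteDimensional ℝ X]
    [NormedAddCommGroup Y] [InnerProductSpace ℝ Y] [FiniteDimensional ℝ Y]
    [NormedAddCommGroup Z] [InnerProductSpace ℝ Z] [FiniteDimensional ℝ Z]
    [NormedAddCommGroup W] [InnerProductSpace ℝ W] [FiniteDimensional ℝ W]
    (Jx : X →ₗ[ℝ] W) (Jy : Y →ₗ[ℝ] W) (Jz : Z →ₗ[ℝ] W)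
    (hfeas : LinearMap.range Jx ≤ LinearMap.range Jy ⊔ LinearMap.range Jz)
    (K : Submodule ℝ Y)
    (hK : K = (LinearMap.ker (Jy.coprod Jz)).map (LinearMap.fst ℝ Y Z)) :
    ∃! H : X →ₗ[ℝ] Y, ∀ x : X,
      H x ∈ Kᗮ ∧ ∃ z : Z, Jx x + Jy (H x) + Jz z = 0 :=
  stmt5_general Jx Jy Jz hfeas K hK
end

section
/- Let H : X → Y assign to each x the unique y ∈ Kᗮ with ∃ z, Jx x + Jy y + Jz z = 0, and let H̄ : X → Y × Z assign to each x the unique pair (y,z) orthogonal to ker L (where L : Y × Z → W is L(y,z) = Jy y + Jz z and Y × Z carries the product inner product ‖(y,z)‖² = ‖y‖² + ‖z‖²) satisfying Jx x + Jy y + Jz z = 0. Then ‖H x‖ ≤ ‖H̄ x‖ for every x ∈ X, and consequently the operator norm of H is at most the operator norm of H̄. (Linearized form of Proposition 1.4: the condition number of solving for y alone is at most the condition number of solving for the pair (y,z).) -/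
/-!
Any two feasible `y` for the same `x` differ by an element of `K`, so the feasible `y` form a coset
of `K`, and its element `H x` in `Kᗮ` has the least norm in that coset (Pythagoras). The first
component of `H̄ x` is such a feasible `y`, and in the ℓ² product it is no longer than `H̄ x` itself.
-/

theorem Submodule.norm_le_of_mem_orthogonal_of_sub_mem {𝕜 E : Type*} [RCLike 𝕜]
    [NormedAddCommGroup E] [InnerProductSpace 𝕜 E] {K : Submodule 𝕜 E} {v w : E}
    (hv : v ∈ Kᗮ) (hw : w - v ∈ K) : ‖v‖ ≤ ‖w‖ := by
  have hpyth : ‖w‖ * ‖w‖ = ‖v‖ * ‖v‖ + ‖w - v‖ * ‖w - v‖ := by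
    simpa using norm_add_sq_eq_norm_sq_add_norm_sq_of_inner_eq_zero v (w - v)
      (K.inner_left_of_mem_orthogonal hw hv)
  nlinarith [norm_nonneg v, norm_nonneg w, mul_self_nonneg ‖w - v‖]

theorem LinearMap.sub_mem_map_fst_ker_coprod_s6 {R A B C M : Type*} [Ring R]
    [AddCommGroup A] [Module R A] [AddCommGroup B] [Module R B] [AddCommGroup C] [Module R C]
    [AddCommGroup M] [Module R M] (f : A →ₗ[R] M) (g : B →ₗ[R] M) (h : C →ₗ[R] M)
    {a : A} {b b' : B} {c c' : C} (hsol : f a + g b + h c = 0) (hsol' : f a + g b' + h c' = 0) :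
    b' - b ∈ (LinearMap.ker (g.coprod h)).map (LinearMap.fst R B C) := by
  refine ⟨(b' - b, c' - c), ?_, rfl⟩
  rw [SetLike.mem_coe, LinearMap.mem_ker, LinearMap.coprod_apply, map_sub, map_sub]
  linear_combination (norm := module) hsol' - hsol

theorem stmt6_general {X Y Z W : Type*}
    [NormedAddCommGroup X] [InnerProductSpace ℝ X]
    [NormedAddCommGroup Y] [InnerProductSpace ℝ Y]
    [NormedAddCommGroup Z] [InnerProductSpace ℝ Z]
    [NormedAddCommGroup W] [InnerProductSpace ℝ W]
    (Jx : X →ₗ[ℝ] W) (Jy : Y →ₗ[ℝ] W) (Jz : Z →ₗ[ℝ] W)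
    (K : Submodule ℝ Y)
    (hK : K = (LinearMap.ker (Jy.coprod Jz)).map (LinearMap.fst ℝ Y Z))
    (L : WithLp 2 (Y × Z) →ₗ[ℝ] W)
    (hL : ∀ p : WithLp 2 (Y × Z),
      L p = Jy (WithLp.equiv 2 (Y × Z) p).1 + Jz (WithLp.equiv 2 (Y × Z) p).2)
    (H : X →L[ℝ] Y) (Hbar : X →L[ℝ] WithLp 2 (Y × Z))
    (hH : ∀ x : X, H x ∈ Kᗮ ∧ ∃ z : Z, Jx x + Jy (H x) + Jz z = 0)
    (hHbar : ∀ x : X, Hbar x ∈ (LinearMap.ker L)ᗮ ∧ Jx x + L (Hbar x) = 0) :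
    (∀ x : X, ‖H x‖ ≤ ‖Hbar x‖) ∧ ‖H‖ ≤ ‖Hbar‖ := by
  have hpointwise : ∀ x : X, ‖H x‖ ≤ ‖Hbar x‖ := by
    intro x
    obtain ⟨hHK, z, hsol⟩ := hH x
    have hsolbar : Jx x + Jy (Hbar x).fst + Jz (Hbar x).snd = 0 := by
      rw [add_assoc, ← (hHbar x).2, hL]
      rfl
    have hdiff : (Hbar x).fst - H x ∈ K :=
      hK ▸ Jx.sub_mem_map_fst_ker_coprod_s6 Jy Jz hsol hsolbar
    exact (K.norm_le_of_mem_orthogonal_of_sub_mem hHK hdiff).trans (WithLp.norm_fst_le _ _)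
  exact ⟨hpointwise, H.opNorm_le_bound (norm_nonneg Hbar) fun x ↦
    (hpointwise x).trans (Hbar.le_opNorm x)⟩

/-- Linearized form of Proposition 1.4: if `H x` is the minimum-norm `y` (the
unique `y ∈ Kᗮ` feasible for `x`) and `H̄ x` is the minimum-norm pair `(y, z)`
(orthogonal to `ker L` for `L (y, z) = Jy y + Jz z`, with the ℓ² product
norm on `Y × Z`), then `‖H x‖ ≤ ‖H̄ x‖` for all `x`, and hence `‖H‖ ≤ ‖H̄‖`. -/
theorem stmt6 {X Y Z W : Type*}
    [NormedAddCommGroup X] [InnerProductSpace ℝ X] [FiniteDimensional ℝ X]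
    [NormedAddCommGroup Y] [InnerProductSpace ℝ Y] [FiniteDimensional ℝ Y]
    [NormedAddCommGroup Z] [InnerProductSpace ℝ Z] [FiniteDimensional ℝ Z]
    [NormedAddCommGroup W] [InnerProductSpace ℝ W] [FiniteDimensional ℝ W]
    (Jx : X →ₗ[ℝ] W) (Jy : Y →ₗ[ℝ] W) (Jz : Z →ₗ[ℝ] W)
    (hfeas : LinearMap.range Jx ≤ LinearMap.range Jy ⊔ LinearMap.range Jz)
    (K : Submodule ℝ Y)
    (hK : K = (LinearMap.ker (Jy.coprod Jz)).map (LinearMap.fst ℝ Y Z))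
    (L : WithLp 2 (Y × Z) →ₗ[ℝ] W)
    (hL : ∀ p : WithLp 2 (Y × Z),
      L p = Jy (WithLp.equiv 2 (Y × Z) p).1 + Jz (WithLp.equiv 2 (Y × Z) p).2)
    (H : X →L[ℝ] Y) (Hbar : X →L[ℝ] WithLp 2 (Y × Z))
    (hH : ∀ x : X, H x ∈ Kᗮ ∧ ∃ z : Z, Jx x + Jy (H x) + Jz z = 0)
    (hHbar : ∀ x : X, Hbar x ∈ (LinearMap.ker L)ᗮ ∧ Jx x + L (Hbar x) = 0) :
    (∀ x : X, ‖H x‖ ≤ ‖Hbar x‖) ∧ ‖H‖ ≤ ‖Hbar‖ :=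
  stmt6_general Jx Jy Jz K hK L hL H Hbar hH hHbar
end

section
/- If U̇ ∈ ℝ^{n₁×m₁} with U̇ᵀU = 0, V̇ ∈ ℝ^{n₂×m₂} with V̇ᵀV = 0, Ċ ∈ ℝ^{m₁×m₂}, and Ẋ := U̇ C Vᵀ + U Ċ Vᵀ + U C V̇ᵀ, then Ċ = Uᵀ Ẋ V and ‖Ċ‖_F ≤ ‖Ẋ‖_F. (The key estimate in the proof of equation (4.2) of Proposition 4.1: the core component of a perturbation is recovered by multilinear multiplication with the transposed factors and is no larger than the perturbation, showing the condition number of the Tucker core is at most 1, in the matrix case.) -/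
open Matrix

/-- The Frobenius inner product `⟨A, B⟩ = trace (Aᵀ B)` of real matrices. -/
def frobInner {n m : ℕ} (A B : Matrix (Fin n) (Fin m) ℝ) : ℝ :=
  Matrix.trace (Aᵀ * B)

/-- The Frobenius norm of a real matrix. -/
noncomputable def frobNorm {n m : ℕ} (A : Matrix (Fin n) (Fin m) ℝ) : ℝ :=
  Real.sqrt (frobInner A A)

lemma frobInner_self_nonneg {n m : ℕ} (A : Matrix (Fin n) (Fin m) ℝ) :
    0 ≤ frobInner A A := by
  unfold frobInner
  rw [Matrix.trace]
  refine Finset.sum_nonneg fun j _ => ?_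
  simp only [Matrix.diag_apply, Matrix.mul_apply, Matrix.transpose_apply]
  exact Finset.sum_nonneg fun i _ => mul_self_nonneg _

lemma frobInner_add_right {n m : ℕ} (A B C : Matrix (Fin n) (Fin m) ℝ) :
    frobInner A (B + C) = frobInner A B + frobInner A C := by
  simp [frobInner, Matrix.mul_add]

lemma frobInner_add_left {n m : ℕ} (A B C : Matrix (Fin n) (Fin m) ℝ) :
    frobInner (A + B) C = frobInner A C + frobInner B C := by
  simp [frobInner, Matrix.add_mul, Matrix.transpose_add]

/-- Key estimate in the proof of (4.2) in Proposition 4.1, matrix case: if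
`Ẋ = U̇ C Vᵀ + U Ċ Vᵀ + U C V̇ᵀ` with `U̇ᵀU = 0` and `V̇ᵀV = 0`, then
`Ċ = Uᵀ Ẋ V` and `‖Ċ‖_F ≤ ‖Ẋ‖_F`. -/
theorem stmt11 {n₁ m₁ n₂ m₂ : ℕ}
    (U : Matrix (Fin n₁) (Fin m₁) ℝ) (V : Matrix (Fin n₂) (Fin m₂) ℝ)
    (C : Matrix (Fin m₁) (Fin m₂) ℝ)
    (hU : Uᵀ * U = 1) (hV : Vᵀ * V = 1)
    (Ud : Matrix (Fin n₁) (Fin m₁) ℝ) (hUd : Udᵀ * U = 0)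
    (Vd : Matrix (Fin n₂) (Fin m₂) ℝ) (hVd : Vdᵀ * V = 0)
    (Cd : Matrix (Fin m₁) (Fin m₂) ℝ)
    (Xd : Matrix (Fin n₁) (Fin n₂) ℝ)
    (hXd : Xd = Ud * C * Vᵀ + U * Cd * Vᵀ + U * C * Vdᵀ) :
    Cd = Uᵀ * Xd * V ∧ frobNorm Cd ≤ frobNorm Xd := by
  have hUUd : Uᵀ * Ud = 0 := by
    have := congrArg Matrix.transpose hUd
    simpa using this
  constructor
  · subst hXd
    simp only [Matrix.mul_add, Matrix.add_mul, ← Matrix.mul_assoc]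
    rw [show Uᵀ * Ud * C * Vᵀ * V = (Uᵀ * Ud) * (C * (Vᵀ * V)) by
      simp [Matrix.mul_assoc]]
    rw [show Uᵀ * U * Cd * Vᵀ * V = (Uᵀ * U) * (Cd * (Vᵀ * V)) by
      simp [Matrix.mul_assoc]]
    rw [show Uᵀ * U * C * Vdᵀ * V = (Uᵀ * U) * (C * (Vdᵀ * V)) by
      simp [Matrix.mul_assoc]]
    simp [hU, hV, hUUd, hVd]
  · set A : Matrix (Fin n₁) (Fin n₂) ℝ := U * Cd * Vᵀ with hA
    set W : Matrix (Fin n₁) (Fin n₂) ℝ := Ud * C * Vᵀ + U * C * Vdᵀ with hW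
    have hXd' : Xd = A + W := by rw [hXd, hA, hW]; abel
    have hAA : frobInner A A = frobInner Cd Cd := by
      unfold frobInner
      rw [hA]
      rw [show (U * Cd * Vᵀ)ᵀ * (U * Cd * Vᵀ)
          = V * (Cdᵀ * ((Uᵀ * U) * (Cd * Vᵀ))) by
        simp [Matrix.transpose_mul, Matrix.mul_assoc]]
      rw [hU, Matrix.one_mul, Matrix.trace_mul_comm]
      rw [show Cdᵀ * (Cd * Vᵀ) * V = Cdᵀ * Cd * (Vᵀ * V) by
        simp [Matrix.mul_assoc]]
      rw [hV, Matrix.mul_one]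
    have hAW : frobInner A W = 0 := by
      unfold frobInner
      rw [hA, hW, Matrix.mul_add]
      rw [Matrix.trace_add]
      rw [show (U * Cd * Vᵀ)ᵀ * (Ud * C * Vᵀ)
          = V * (Cdᵀ * ((Uᵀ * Ud) * (C * Vᵀ))) by
        simp [Matrix.transpose_mul, Matrix.mul_assoc]]
      rw [show (U * Cd * Vᵀ)ᵀ * (U * C * Vdᵀ)
          = V * (Cdᵀ * ((Uᵀ * U) * (C * Vdᵀ))) by
        simp [Matrix.transpose_mul, Matrix.mul_assoc]]
      rw [hUUd, hU]
      simp only [Matrix.zero_mul, Matrix.mul_zero, Matrix.trace_zero, Matrix.one_mul]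
      rw [Matrix.trace_mul_comm]
      rw [show Cdᵀ * (C * Vdᵀ) * V = Cdᵀ * C * (Vdᵀ * V) by
        simp [Matrix.mul_assoc]]
      simp [hVd]
    have hWA : frobInner W A = 0 := by
      have : frobInner W A = frobInner A W := by
        rw [frobInner, frobInner, ← Matrix.trace_transpose (Wᵀ * A),
          Matrix.transpose_mul, Matrix.transpose_transpose]
      rw [this, hAW]
    have hXX : frobInner Xd Xd = frobInner Cd Cd + frobInner W W := by
      rw [hXd', frobInner_add_left, frobInner_add_right, frobInner_add_right,
        hAA, ← frobInner_add_right A, ← hW, hAW, frobInner_add_right W A W, hWA]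
      ring
    unfold frobNorm
    apply Real.sqrt_le_sqrt
    rw [hXX]
    have := frobInner_self_nonneg W
    linarith
end

section
/- Let σ ≥ 0 be any constant such that ‖Cᵀ u‖ ≥ σ ‖u‖ for all u ∈ ℝ^{m₁} (i.e. σ is at most the smallest singular value of C). Then for every U̇ ∈ ℝ^{n₁×m₁} one has ‖U̇ C Vᵀ‖_F ≥ σ ‖U̇‖_F. Consequently, if Ẋ = U̇ C Vᵀ + U Ċ Vᵀ + U C V̇ᵀ with U̇ᵀU = 0, V̇ᵀV = 0, then σ ‖U̇‖_F ≤ ‖Ẋ‖_F. (The bound underlying equation (4.1) of Proposition 4.1: the sensitivity of the factor U in a Tucker decomposition is controlled by the reciprocal of the smallest singular value of the flattened core, stated in the matrix case.) -/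
open Matrix

/-- The Euclidean norm of a real vector. -/
noncomputable def euclNorm {k : ℕ} (v : Fin k → ℝ) : ℝ :=
  Real.sqrt (∑ i, v i ^ 2)

lemma frobInner_self_eq {n m : ℕ} (A : Matrix (Fin n) (Fin m) ℝ) :
    frobInner A A = ∑ i, ∑ j, A i j ^ 2 := by
  rw [Finset.sum_comm]
  simp [frobInner, Matrix.trace, Matrix.mul_apply, Matrix.diag, sq]

lemma frobInner_mulVT {n m k : ℕ} (M N : Matrix (Fin n) (Fin k) ℝ)
    (V : Matrix (Fin m) (Fin k) ℝ) (hV : Vᵀ * V = 1) :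
    frobInner (M * Vᵀ) (N * Vᵀ) = frobInner M N := by
  unfold frobInner
  rw [Matrix.transpose_mul, Matrix.transpose_transpose]
  simp only [Matrix.mul_assoc]
  rw [Matrix.trace_mul_comm V, Matrix.mul_assoc, Matrix.mul_assoc N, hV, Matrix.mul_one]

lemma part1 {n₁ m₁ m₂ : ℕ} (C : Matrix (Fin m₁) (Fin m₂) ℝ)
    (σ : ℝ) (hσ : 0 ≤ σ)
    (hC : ∀ u : Fin m₁ → ℝ, σ * euclNorm u ≤ euclNorm (Cᵀ.mulVec u))
    (Ud : Matrix (Fin n₁) (Fin m₁) ℝ) :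
    σ ^ 2 * frobInner Ud Ud ≤ frobInner (Ud * C) (Ud * C) := by
  rw [frobInner_self_eq, frobInner_self_eq, Finset.mul_sum]
  apply Finset.sum_le_sum
  intro i _
  have h := hC (Ud i)
  have h1 : (σ * euclNorm (Ud i)) ^ 2 ≤ euclNorm (Cᵀ.mulVec (Ud i)) ^ 2 := by
    have hn : 0 ≤ σ * euclNorm (Ud i) := by
      apply mul_nonneg hσ; exact Real.sqrt_nonneg _
    exact pow_le_pow_left₀ hn h 2
  have e1 : euclNorm (Ud i) ^ 2 = ∑ j, Ud i j ^ 2 := by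
    unfold euclNorm; rw [Real.sq_sqrt]; positivity
  have e2 : euclNorm (Cᵀ.mulVec (Ud i)) ^ 2 = ∑ j, (Cᵀ.mulVec (Ud i)) j ^ 2 := by
    unfold euclNorm; rw [Real.sq_sqrt]; positivity
  rw [mul_pow, e1, e2] at h1
  calc σ ^ 2 * ∑ j, Ud i j ^ 2 ≤ ∑ j, (Cᵀ.mulVec (Ud i)) j ^ 2 := h1
    _ = ∑ j, (Ud * C) i j ^ 2 := by
        apply Finset.sum_congr rfl
        intro j _
        simp [Matrix.mulVec, Matrix.mul_apply, dotProduct, mul_comm]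

lemma sqrt_step {n m p q : ℕ} (A : Matrix (Fin n) (Fin m) ℝ)
    (B : Matrix (Fin p) (Fin q) ℝ) (σ : ℝ) (hσ : 0 ≤ σ)
    (h : σ ^ 2 * frobInner A A ≤ frobInner B B) :
    σ * frobNorm A ≤ frobNorm B := by
  have : σ * frobNorm A = Real.sqrt (σ ^ 2 * frobInner A A) := by
    rw [Real.sqrt_mul (by positivity), Real.sqrt_sq hσ, frobNorm]
  rw [this, frobNorm]
  exact Real.sqrt_le_sqrt h

/-- The bound underlying equation (4.1) of Proposition 4.1, matrix case: if
`σ ≥ 0` satisfies `‖Cᵀ u‖ ≥ σ ‖u‖` for all `u` (i.e. `σ` is at most the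
smallest singular value of `C`), then `‖U̇ C Vᵀ‖_F ≥ σ ‖U̇‖_F` for every `U̇`;
consequently, if `Ẋ = U̇ C Vᵀ + U Ċ Vᵀ + U C V̇ᵀ` with `U̇ᵀU = 0` and
`V̇ᵀV = 0`, then `σ ‖U̇‖_F ≤ ‖Ẋ‖_F`. -/
theorem stmt13 {n₁ m₁ n₂ m₂ : ℕ}
    (U : Matrix (Fin n₁) (Fin m₁) ℝ) (V : Matrix (Fin n₂) (Fin m₂) ℝ)
    (C : Matrix (Fin m₁) (Fin m₂) ℝ)
    (hU : Uᵀ * U = 1) (hV : Vᵀ * V = 1)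
    (σ : ℝ) (hσ : 0 ≤ σ)
    (hC : ∀ u : Fin m₁ → ℝ, σ * euclNorm u ≤ euclNorm (Cᵀ.mulVec u)) :
    (∀ Ud : Matrix (Fin n₁) (Fin m₁) ℝ,
      σ * frobNorm Ud ≤ frobNorm (Ud * C * Vᵀ)) ∧
    (∀ (Ud : Matrix (Fin n₁) (Fin m₁) ℝ) (Cd : Matrix (Fin m₁) (Fin m₂) ℝ)
        (Vd : Matrix (Fin n₂) (Fin m₂) ℝ),
      Udᵀ * U = 0 → Vdᵀ * V = 0 →
        σ * frobNorm Ud ≤ frobNorm (Ud * C * Vᵀ + U * Cd * Vᵀ + U * C * Vdᵀ)) := by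
  constructor
  · intro Ud
    apply sqrt_step _ _ _ hσ
    rw [frobInner_mulVT _ _ V hV]
    exact part1 C σ hσ hC Ud
  · intro Ud Cd Vd hUd hVd
    set A := Ud * C * Vᵀ with hA
    set B := U * Cd * Vᵀ with hB
    set D := U * C * Vdᵀ with hD
    have hAB : Aᵀ * B = 0 := by
      rw [hA, hB]
      rw [Matrix.transpose_mul, Matrix.transpose_mul, Matrix.transpose_transpose]
      simp only [Matrix.mul_assoc]
      rw [← Matrix.mul_assoc Udᵀ U, hUd, Matrix.zero_mul, Matrix.mul_zero, Matrix.mul_zero]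
    have hAD : Aᵀ * D = 0 := by
      rw [hA, hD]
      rw [Matrix.transpose_mul, Matrix.transpose_mul, Matrix.transpose_transpose]
      simp only [Matrix.mul_assoc]
      rw [← Matrix.mul_assoc Udᵀ U, hUd, Matrix.zero_mul, Matrix.mul_zero, Matrix.mul_zero]
    have hBD : frobInner B D = 0 := by
      unfold frobInner
      rw [hB, hD]
      rw [Matrix.transpose_mul, Matrix.transpose_mul, Matrix.transpose_transpose]
      simp only [Matrix.mul_assoc]
      rw [← Matrix.mul_assoc Uᵀ U, hU, Matrix.one_mul, Matrix.trace_mul_comm V]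
      simp only [Matrix.mul_assoc]
      rw [hVd, Matrix.mul_zero, Matrix.mul_zero, Matrix.trace_zero]
    have hiAB : frobInner A B = 0 := by unfold frobInner; rw [hAB, Matrix.trace_zero]
    have hiAD : frobInner A D = 0 := by unfold frobInner; rw [hAD, Matrix.trace_zero]
    have hiBA : frobInner B A = 0 := by
      unfold frobInner
      rw [← Matrix.trace_transpose, Matrix.transpose_mul, Matrix.transpose_transpose, hAB, Matrix.trace_zero]
    have hiDA : frobInner D A = 0 := by
      unfold frobInner
      rw [← Matrix.trace_transpose, Matrix.transpose_mul, Matrix.transpose_transpose, hAD, Matrix.trace_zero]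
    have hiDB : frobInner D B = 0 := by
      unfold frobInner
      rw [← Matrix.trace_transpose, Matrix.transpose_mul, Matrix.transpose_transpose]
      exact hBD
    have expand : frobInner (A + B + D) (A + B + D)
        = frobInner A A + frobInner B B + frobInner D D := by
      unfold frobInner at *
      simp only [Matrix.transpose_add, Matrix.add_mul, Matrix.mul_add, Matrix.trace_add]
      rw [hiAB, hiAD, hiBA, hiDA, hBD, hiDB]
      ring
    apply sqrt_step _ _ _ hσ
    rw [expand]
    have h1 : σ ^ 2 * frobInner Ud Ud ≤ frobInner A A := by
      rw [hA, frobInner_mulVT _ _ V hV]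
      exact part1 C σ hσ hC Ud
    have h2 := frobInner_self_nonneg B
    have h3 := frobInner_self_nonneg D
    linarith
end
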